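/- arXiv:2311.11869 — 3 statements merged into one kernel-verified Lean document; each statement's English description precedes it below -/
import Mathlib

section
/- Let APX be a triangle-free 2-matching of G, OPT a maximum triangle-free 2-matching maximizing |APX ∩ OPT|, and suppose u is a vertex with |N_APX(u)| > |N_OPT(u)|. Then for any edge uv ∈ APX \ OPT, the edge set OPT ∪ {uv} contains exactly one triangle. -/
open Finset symmDiff

variable {V : Type*}

/-- Neighbors of `u` via edges in `S`. -/
def nbrs [Fintype V] [DecidableEq V] (S : Finset (Sym2 V)) (u : V) : Finset V :=
  Finset.univ.filter (fun v => s(u, v) ∈ S)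

/-- `M` is a (simple) 2-matching of `G`: a set of edges of `G` giving each vertex degree ≤ 2. -/
def Is2Matching [Fintype V] [DecidableEq V] (G : SimpleGraph V) [DecidableRel G.Adj]
    (M : Finset (Sym2 V)) : Prop :=
  M ⊆ G.edgeFinset ∧ ∀ u : V, (nbrs M u).card ≤ 2

/-- The edge set `S` contains a triangle. -/
def HasTriangle [DecidableEq V] (S : Finset (Sym2 V)) : Prop :=
  ∃ a b c : V, a ≠ b ∧ b ≠ c ∧ a ≠ c ∧ s(a, b) ∈ S ∧ s(b, c) ∈ S ∧ s(a, c) ∈ S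

/-- A triangle-free 2-matching. -/
def IsTF2M [Fintype V] [DecidableEq V] (G : SimpleGraph V) [DecidableRel G.Adj]
    (M : Finset (Sym2 V)) : Prop :=
  Is2Matching G M ∧ ¬ HasTriangle M

/-- The list of edges of a trail given by its vertex sequence. -/
def trailEdges (vs : List V) : List (Sym2 V) :=
  List.zipWith (fun a b => s(a, b)) vs vs.tail

/-- A trail: at least one edge, consecutive vertices distinct, all edges distinct. -/
def IsTrail [DecidableEq V] (vs : List V) : Prop :=
  2 ≤ vs.length ∧ vs.Chain' (· ≠ ·) ∧ (trailEdges vs).Nodup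

/-- Edge set of a trail. -/
def edgesOf [DecidableEq V] (vs : List V) : Finset (Sym2 V) :=
  (trailEdges vs).toFinset

/-- An alternating trail w.r.t. `M`: edges alternate between `M` and its complement. -/
def IsAlternating [DecidableEq V] (M : Finset (Sym2 V)) (vs : List V) : Prop :=
  IsTrail vs ∧ (trailEdges vs).Chain' (fun e f => e ∈ M ↔ f ∉ M)

/-- An augmenting trail for `M`: alternating, and `M ∆ P` is a triangle-free 2-matching
of size `|M| + 1`. -/
def IsAugmenting [Fintype V] [DecidableEq V] (G : SimpleGraph V) [DecidableRel G.Adj]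
    (M : Finset (Sym2 V)) (vs : List V) : Prop :=
  IsAlternating M vs ∧ IsTF2M G (M ∆ edgesOf vs) ∧ (M ∆ edgesOf vs).card = M.card + 1

/-- The first edge of the trail `vs` belongs to `S`. -/
def FirstEdgeIn [DecidableEq V] (vs : List V) (S : Finset (Sym2 V)) : Prop :=
  ∃ e ∈ S, (trailEdges vs).head? = some e

/-- The last edge of the trail `vs` belongs to `S`. -/
def LastEdgeIn [DecidableEq V] (vs : List V) (S : Finset (Sym2 V)) : Prop :=
  ∃ e ∈ S, (trailEdges vs).getLast? = some e

/-- `u` is deficient w.r.t. `E'`. -/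
def Deficient [Fintype V] [DecidableEq V] (APX OPT E' : Finset (Sym2 V)) (u : V) : Prop :=
  (nbrs (APX \ E') u).card < (nbrs (OPT \ E') u).card

/-- `a b c` form a triangle in the edge set `S`. -/
def TriIn [DecidableEq V] (S : Finset (Sym2 V)) (a b c : V) : Prop :=
  a ≠ b ∧ b ≠ c ∧ a ≠ c ∧ s(a, b) ∈ S ∧ s(b, c) ∈ S ∧ s(a, c) ∈ S

section Helpers

variable [Fintype V] [DecidableEq V]

lemma mem_nbrs {S : Finset (Sym2 V)} {u w : V} : w ∈ nbrs S u ↔ s(u, w) ∈ S := by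
  simp [nbrs]

lemma nbrs_mono {S T : Finset (Sym2 V)} (h : S ⊆ T) (u : V) : nbrs S u ⊆ nbrs T u :=
  fun w hw => mem_nbrs.2 (h (mem_nbrs.1 hw))

lemma nbrs_insert_left {S : Finset (Sym2 V)} {u v : V} (huv : u ≠ v) :
    nbrs (insert s(u, v) S) u = insert v (nbrs S u) := by
  ext w
  simp only [mem_nbrs, Finset.mem_insert, Sym2.eq_iff]
  constructor
  · rintro ((⟨-, h⟩ | ⟨h, -⟩) | h)
    · exact Or.inl h
    · exact absurd h huv
    · exact Or.inr h
  · rintro (rfl | h)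
    · tauto
    · exact Or.inr h

lemma nbrs_insert_other {S : Finset (Sym2 V)} {u v x : V} (hx : x ≠ u) (hx' : x ≠ v) :
    nbrs (insert s(u, v) S) x = nbrs S x := by
  ext w
  simp only [mem_nbrs, Finset.mem_insert, Sym2.eq_iff]
  constructor
  · rintro ((⟨h, -⟩ | ⟨h, -⟩) | h)
    · exact absurd h hx
    · exact absurd h hx'
    · exact h
  · exact fun h => Or.inr h

lemma nbrs_erase_left {S : Finset (Sym2 V)} {v w : V} (hvw : v ≠ w) :
    nbrs (S.erase s(v, w)) v = (nbrs S v).erase w := by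
  ext x
  simp only [mem_nbrs, Finset.mem_erase, ne_eq, Sym2.eq_iff]
  constructor
  · rintro ⟨hne, h⟩
    exact ⟨fun hx => hne (by tauto), h⟩
  · rintro ⟨hne, h⟩
    refine ⟨?_, h⟩
    rintro (⟨-, h1⟩ | ⟨h1, -⟩)
    · exact hne h1
    · exact hvw h1

lemma extract_tri (OPT : Finset (Sym2 V)) (hfree : ¬ HasTriangle OPT) {u v a b c : V}
    (hab : a ≠ b) (hbc : b ≠ c) (hac : a ≠ c)
    (h1 : s(a, b) ∈ insert (s(u, v)) OPT) (h2 : s(b, c) ∈ insert (s(u, v)) OPT)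
    (h3 : s(a, c) ∈ insert (s(u, v)) OPT) :
    ∃ t, t ≠ u ∧ t ≠ v ∧ s(u, t) ∈ OPT ∧ s(v, t) ∈ OPT ∧
      ({a, b, c} : Finset V) = {u, v, t} := by
  rcases Finset.mem_insert.1 h1 with e1 | m1
  · rcases Sym2.eq_iff.1 e1 with ⟨rfl, rfl⟩ | ⟨rfl, rfl⟩
    · -- u = a, v = b
      have h2' : s(b, c) ∈ OPT := by
        rcases Finset.mem_insert.1 h2 with e | m
        · rcases Sym2.eq_iff.1 e with ⟨h, -⟩ | ⟨-, h⟩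
          · exact absurd h hab.symm
          · exact absurd h hac.symm
        · exact m
      have h3' : s(a, c) ∈ OPT := by
        rcases Finset.mem_insert.1 h3 with e | m
        · rcases Sym2.eq_iff.1 e with ⟨-, h⟩ | ⟨h, -⟩
          · exact absurd h hbc.symm
          · exact absurd h hab
        · exact m
      exact ⟨c, hac.symm, hbc.symm, h3', h2', rfl⟩
    · -- v = a, u = b
      have h2' : s(b, c) ∈ OPT := by
        rcases Finset.mem_insert.1 h2 with e | m
        · rcases Sym2.eq_iff.1 e with ⟨-, h⟩ | ⟨h, -⟩
          · exact absurd h hac.symm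
          · exact absurd h hab.symm
        · exact m
      have h3' : s(a, c) ∈ OPT := by
        rcases Finset.mem_insert.1 h3 with e | m
        · rcases Sym2.eq_iff.1 e with ⟨h, -⟩ | ⟨-, h⟩
          · exact absurd h hab
          · exact absurd h hbc.symm
        · exact m
      refine ⟨c, hbc.symm, hac.symm, h2', h3', ?_⟩
      ext x; simp only [Finset.mem_insert, Finset.mem_singleton]; tauto
  · rcases Finset.mem_insert.1 h2 with e2 | m2
    · rcases Sym2.eq_iff.1 e2 with ⟨rfl, rfl⟩ | ⟨rfl, rfl⟩
      · -- u = b, v = c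
        have h3' : s(a, c) ∈ OPT := by
          rcases Finset.mem_insert.1 h3 with e | m
          · rcases Sym2.eq_iff.1 e with ⟨h, -⟩ | ⟨h, -⟩
            · exact absurd h hab
            · exact absurd h hac
          · exact m
        refine ⟨a, hab, hac, ?_, ?_, ?_⟩
        · rw [Sym2.eq_swap]; exact m1
        · rw [Sym2.eq_swap]; exact h3'
        · ext x; simp only [Finset.mem_insert, Finset.mem_singleton]; tauto
      · -- v = b, u = c
        have h3' : s(a, c) ∈ OPT := by
          rcases Finset.mem_insert.1 h3 with e | m
          · rcases Sym2.eq_iff.1 e with ⟨h, -⟩ | ⟨h, -⟩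
            · exact absurd h hac
            · exact absurd h hab
          · exact m
        refine ⟨a, hac, hab, ?_, ?_, ?_⟩
        · rw [Sym2.eq_swap]; exact h3'
        · rw [Sym2.eq_swap]; exact m1
        · ext x; simp only [Finset.mem_insert, Finset.mem_singleton]; tauto
    · rcases Finset.mem_insert.1 h3 with e3 | m3
      · rcases Sym2.eq_iff.1 e3 with ⟨rfl, rfl⟩ | ⟨rfl, rfl⟩
        · -- u = a, v = c
          refine ⟨b, hab.symm, hbc, m1, ?_, ?_⟩
          · rw [Sym2.eq_swap]; exact m2
          · ext x; simp only [Finset.mem_insert, Finset.mem_singleton]; tauto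
        · -- v = a, u = c
          refine ⟨b, hbc, hab.symm, ?_, m1, ?_⟩
          · rw [Sym2.eq_swap]; exact m2
          · ext x; simp only [Finset.mem_insert, Finset.mem_singleton]; tauto
      · exact absurd ⟨a, b, c, hab, hbc, hac, m1, m2, m3⟩ hfree

end Helpers

theorem stmt_2 [Fintype V] [DecidableEq V] (G : SimpleGraph V) [DecidableRel G.Adj]
    (APX OPT : Finset (Sym2 V))
    (hAPX : IsTF2M G APX) (hOPT : IsTF2M G OPT)
    (hmax : ∀ M : Finset (Sym2 V), IsTF2M G M → M.card ≤ OPT.card)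
    (hint : ∀ M : Finset (Sym2 V), IsTF2M G M → M.card = OPT.card →
      (APX ∩ M).card ≤ (APX ∩ OPT).card)
    (u v : V) (hu : (nbrs OPT u).card < (nbrs APX u).card)
    (huv : s(u, v) ∈ APX \ OPT) :
    ∃! T : Finset V, T.card = 3 ∧
      ∀ x ∈ T, ∀ y ∈ T, x ≠ y → s(x, y) ∈ insert (s(u, v)) OPT := by
  obtain ⟨⟨hAsub, hAdeg⟩, hAfree⟩ := hAPX
  obtain ⟨⟨hOsub, hOdeg⟩, hOfree⟩ := hOPT
  obtain ⟨huvA, huvO⟩ := Finset.mem_sdiff.1 huv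
  have hadj : G.Adj u v := by
    have := hAsub huvA
    rwa [SimpleGraph.mem_edgeFinset, SimpleGraph.mem_edgeSet] at this
  have hne : u ≠ v := hadj.ne
  have hdegu : (nbrs OPT u).card ≤ 1 := by
    have := hAdeg u; omega
  have ht : ∃ t, t ≠ u ∧ t ≠ v ∧ s(u, t) ∈ OPT ∧ s(v, t) ∈ OPT := by
    by_cases hdv : (nbrs OPT v).card ≤ 1
    · -- can just add the edge
      set OPT' : Finset (Sym2 V) := insert s(u, v) OPT with hO'
      have hcard : OPT'.card = OPT.card + 1 := Finset.card_insert_of_notMem huvO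
      have h2m : Is2Matching G OPT' := by
        refine ⟨Finset.insert_subset (hAsub huvA) hOsub, fun x => ?_⟩
        by_cases hxu : x = u
        · rw [hxu, hO', nbrs_insert_left hne]
          have := Finset.card_insert_le v (nbrs OPT u); omega
        · by_cases hxv : x = v
          · rw [hxv, hO', show (s(u, v) : Sym2 V) = s(v, u) from Sym2.eq_swap,
              nbrs_insert_left hne.symm]
            have := Finset.card_insert_le u (nbrs OPT v); omega
          · rw [hO', nbrs_insert_other hxu hxv]; exact hOdeg x
      have htri : HasTriangle OPT' := by
        by_contra h
        have := hmax OPT' ⟨h2m, h⟩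
        omega
      obtain ⟨a, b, c, hab, hbc, hac, e1, e2, e3⟩ := htri
      obtain ⟨t, h1, h2, h3, h4, -⟩ := extract_tri OPT hOfree hab hbc hac e1 e2 e3
      exact ⟨t, h1, h2, h3, h4⟩
    · push_neg at hdv
      have hdv2 : (nbrs OPT v).card = 2 := le_antisymm (hOdeg v) hdv
      have humem : u ∈ nbrs APX v := mem_nbrs.2 (Sym2.eq_swap ▸ huvA)
      have hunot : u ∉ nbrs OPT v := fun h => huvO (Sym2.eq_swap ▸ mem_nbrs.1 h)
      have hwex : ∃ w ∈ nbrs OPT v, w ∉ nbrs APX v := by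
        by_contra h
        push_neg at h
        have hsub : insert u (nbrs OPT v) ⊆ nbrs APX v :=
          Finset.insert_subset humem h
        have := Finset.card_le_card hsub
        rw [Finset.card_insert_of_notMem hunot] at this
        have := hAdeg v
        omega
      obtain ⟨w, hwO, hwA⟩ := hwex
      have hvwO : s(v, w) ∈ OPT := mem_nbrs.1 hwO
      have hvw : v ≠ w := by
        have := hOsub hvwO
        rw [SimpleGraph.mem_edgeFinset, SimpleGraph.mem_edgeSet] at this
        exact this.ne
      have hwu : w ≠ u := by
        rintro rfl
        exact huvO (Sym2.eq_swap ▸ hvwO)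
      have hsvwA : s(v, w) ∉ APX := fun h => hwA (mem_nbrs.2 h)
      set OPT' : Finset (Sym2 V) := insert s(u, v) (OPT.erase s(v, w)) with hO'
      have hnotmem : s(u, v) ∉ OPT.erase s(v, w) := fun h => huvO (Finset.mem_of_mem_erase h)
      have hpos : 0 < OPT.card := Finset.card_pos.2 ⟨_, hvwO⟩
      have hcard' : OPT'.card = OPT.card := by
        rw [hO', Finset.card_insert_of_notMem hnotmem, Finset.card_erase_of_mem hvwO]
        omega
      have h2m : Is2Matching G OPT' := by
        refine ⟨Finset.insert_subset (hAsub huvA)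
          ((Finset.erase_subset _ _).trans hOsub), fun x => ?_⟩
        by_cases hxu : x = u
        · rw [hxu, hO', nbrs_insert_left hne]
          have h1 := Finset.card_insert_le v (nbrs (OPT.erase s(v, w)) u)
          have h2 := Finset.card_le_card (nbrs_mono (Finset.erase_subset s(v, w) OPT) u)
          omega
        · by_cases hxv : x = v
          · rw [hxv, hO', show (s(u, v) : Sym2 V) = s(v, u) from Sym2.eq_swap,
              nbrs_insert_left hne.symm, nbrs_erase_left hvw]
            have h1 := Finset.card_insert_le u ((nbrs OPT v).erase w)
            have h2 := Finset.card_erase_of_mem hwO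
            omega
          · rw [hO', nbrs_insert_other hxu hxv]
            have := Finset.card_le_card (nbrs_mono (Finset.erase_subset s(v, w) OPT) x)
            have := hOdeg x
            omega
      have htri : HasTriangle OPT' := by
        by_contra h
        have hc := hint OPT' ⟨h2m, h⟩ hcard'
        have hint_eq : APX ∩ OPT' = insert s(u, v) (APX ∩ OPT) := by
          ext e
          simp only [hO', Finset.mem_inter, Finset.mem_insert, Finset.mem_erase]
          constructor
          · rintro ⟨heA, (rfl | ⟨-, heO⟩)⟩
            · exact Or.inl rfl
            · exact Or.inr ⟨heA, heO⟩
          · rintro (rfl | ⟨heA, heO⟩)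
            · exact ⟨huvA, Or.inl rfl⟩
            · exact ⟨heA, Or.inr ⟨fun hh => hsvwA (hh ▸ heA), heO⟩⟩
        rw [hint_eq, Finset.card_insert_of_notMem
          (fun h => huvO (Finset.mem_inter.1 h).2)] at hc
        omega
      obtain ⟨a, b, c, hab, hbc, hac, e1, e2, e3⟩ := htri
      have hsub' : OPT' ⊆ insert s(u, v) OPT := by
        rw [hO']; exact Finset.insert_subset_insert _ (Finset.erase_subset _ _)
      obtain ⟨t, h1, h2, h3, h4, -⟩ :=
        extract_tri OPT hOfree hab hbc hac (hsub' e1) (hsub' e2) (hsub' e3)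
      exact ⟨t, h1, h2, h3, h4⟩
  obtain ⟨t, htu, htv, hut, hvt⟩ := ht
  have m_uv : s(u, v) ∈ insert s(u, v) OPT := Finset.mem_insert_self _ _
  have m_vu : s(v, u) ∈ insert s(u, v) OPT := by
    rw [show (s(v, u) : Sym2 V) = s(u, v) from Sym2.eq_swap]; exact m_uv
  have m_ut : s(u, t) ∈ insert s(u, v) OPT := Finset.mem_insert_of_mem hut
  have m_tu : s(t, u) ∈ insert s(u, v) OPT := by
    rw [show (s(t, u) : Sym2 V) = s(u, t) from Sym2.eq_swap]; exact m_ut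
  have m_vt : s(v, t) ∈ insert s(u, v) OPT := Finset.mem_insert_of_mem hvt
  have m_tv : s(t, v) ∈ insert s(u, v) OPT := by
    rw [show (s(t, v) : Sym2 V) = s(v, t) from Sym2.eq_swap]; exact m_vt
  refine ⟨{u, v, t}, ⟨?_, ?_⟩, ?_⟩
  · rw [Finset.card_insert_of_notMem (by
        simp only [Finset.mem_insert, Finset.mem_singleton]
        push_neg
        exact ⟨hne, htu.symm⟩),
      Finset.card_insert_of_notMem (by
        simp only [Finset.mem_singleton]
        exact htv.symm),
      Finset.card_singleton]
  · intro x hx y hy hxy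
    simp only [Finset.mem_insert, Finset.mem_singleton] at hx hy
    rcases hx with rfl | rfl | rfl <;> rcases hy with rfl | rfl | rfl <;>
      first
        | exact absurd rfl hxy
        | assumption
  · rintro T' ⟨hT3, hTp⟩
    obtain ⟨a, b, c, hab, hac, hbc, rfl⟩ := Finset.card_eq_three.1 hT3
    have e1 : s(a, b) ∈ insert s(u, v) OPT :=
      hTp a (by simp) b (by simp) hab
    have e2 : s(b, c) ∈ insert s(u, v) OPT :=
      hTp b (by simp) c (by simp) hbc
    have e3 : s(a, c) ∈ insert s(u, v) OPT :=
      hTp a (by simp) c (by simp) hac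
    obtain ⟨t', ht'u, ht'v, hut', hvt', hset⟩ :=
      extract_tri OPT hOfree hab hbc hac e1 e2 e3
    have htt : t' = t := by
      have h1 : t ∈ nbrs OPT u := mem_nbrs.2 hut
      have h2 : t' ∈ nbrs OPT u := mem_nbrs.2 hut'
      exact Finset.card_le_one.1 hdegu _ h2 _ h1
    rw [hset, htt]
end

section
/- Let APX and OPT be triangle-free 2-matchings and P_1,...,P_{k-1} edge-disjoint alternating trails in APX △ OPT each starting and ending with edges of OPT \ APX. Let P denote the union of their edge sets. Then for every vertex w: |N_APX(w)| − |N_{APX \ P}(w)| ≤ |N_OPT(w)| − |N_{OPT \ P}(w)|. -/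
open Finset symmDiff

variable {V : Type*}

lemma trailEdges_cons' (a b : V) (l : List V) :
    trailEdges (a :: b :: l) = s(a, b) :: trailEdges (b :: l) := rfl

def chg [DecidableEq V] (M : Finset (Sym2 V)) (w : V) (e : Sym2 V) : ℤ :=
  if w ∈ e then (if e ∈ M then 1 else -1) else 0

lemma trail_count_core [DecidableEq V] (M : Finset (Sym2 V)) (w : V) :
    ∀ (rest : List V) (v0 v1 : V),
      List.Chain' (· ≠ ·) (v0 :: v1 :: rest) →
      List.Chain' (fun e f => e ∈ M ↔ f ∉ M) (trailEdges (v0 :: v1 :: rest)) →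
      (∀ e, (trailEdges (v0 :: v1 :: rest)).getLast? = some e → e ∉ M) →
      ((trailEdges (v0 :: v1 :: rest)).map (chg M w)).sum
        ≤ if s(v0, v1) ∈ M then (if w = v0 then 1 else 0)
          else (if w = v0 ∧ ¬ w = v1 then -1 else 0) := by
  intro rest
  induction rest with
  | nil =>
    intro v0 v1 hne _ hlast
    have h0 : s(v0, v1) ∉ M := hlast _ rfl
    have h01 : v0 ≠ v1 := (List.isChain_cons_cons.mp hne).1
    simp only [trailEdges_cons', trailEdges, List.zipWith, List.map, List.sum_cons,
      List.sum_nil, chg, Sym2.mem_iff, h0, if_neg, if_false, add_zero]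
    split_ifs <;> simp_all [chg] <;> split_ifs <;> norm_num
  | cons v2 rest ih =>
    intro v0 v1 hne hc hlast
    have h12 : v1 ≠ v2 := (List.isChain_cons_cons.mp hne.tail).1
    have hne' : List.Chain' (· ≠ ·) (v1 :: v2 :: rest) := hne.tail
    have halt : (s(v0,v1) ∈ M ↔ s(v1,v2) ∉ M) := by
      have := hc
      rw [trailEdges_cons', trailEdges_cons'] at this
      exact (List.isChain_cons_cons.mp this).1
    have hc' : List.Chain' (fun e f => e ∈ M ↔ f ∉ M) (trailEdges (v1 :: v2 :: rest)) := by
      have := hc; rw [trailEdges_cons'] at this; exact this.tail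
    have hlast' : ∀ e, (trailEdges (v1 :: v2 :: rest)).getLast? = some e → e ∉ M := by
      intro e he
      apply hlast
      rw [trailEdges_cons', trailEdges_cons'] at *
      rwa [List.getLast?_cons_cons]
    have IH := ih v1 v2 hne' hc' hlast'
    rw [trailEdges_cons', List.map_cons, List.sum_cons]
    have hw0 : chg M w s(v0,v1) =
        if (w = v0 ∨ w = v1) then (if s(v0,v1) ∈ M then 1 else -1) else 0 := by
      simp [chg, Sym2.mem_iff]
    by_cases hm : s(v0,v1) ∈ M
    · have hm' : s(v1,v2) ∉ M := halt.mp hm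
      rw [if_neg hm'] at IH
      rw [if_pos hm]
      have hS0 : (List.map (chg M w) (trailEdges (v1 :: v2 :: rest))).sum ≤ 0 := by
        refine IH.trans ?_; split_ifs <;> norm_num
      by_cases h0w : w = v0
      · rw [if_pos h0w, hw0, if_pos (Or.inl h0w), if_pos hm]; linarith
      · rw [if_neg h0w]
        by_cases h1w : w = v1
        · have : (w = v1 ∧ ¬ w = v2) := ⟨h1w, by rw [h1w]; exact h12⟩
          rw [if_pos this] at IH
          rw [hw0, if_pos (Or.inr h1w), if_pos hm]; linarith
        · rw [hw0, if_neg (by tauto)]; linarith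
    · have hm' : s(v1,v2) ∈ M := by by_contra h; exact hm (halt.mpr h)
      rw [if_pos hm'] at IH
      rw [if_neg hm]
      by_cases h1w : w = v1
      · rw [if_pos h1w] at IH
        rw [hw0, if_pos (Or.inr h1w), if_neg hm, if_neg (by tauto)]; linarith
      · rw [if_neg h1w] at IH
        by_cases h0w : w = v0
        · rw [hw0, if_pos (Or.inl h0w), if_neg hm, if_pos ⟨h0w, h1w⟩]; linarith
        · rw [hw0, if_neg (by tauto), if_neg (by tauto)]; linarith

lemma sum_chg_finset [DecidableEq V] (M : Finset (Sym2 V)) (w : V) (S : Finset (Sym2 V)) :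
    ∑ e ∈ S, chg M w e
      = ((S.filter (fun e => w ∈ e ∧ e ∈ M)).card : ℤ)
        - ((S.filter (fun e => w ∈ e ∧ e ∉ M)).card : ℤ) := by
  have h : ∀ e, chg M w e =
      (if (w ∈ e ∧ e ∈ M) then (1:ℤ) else 0) + (if (w ∈ e ∧ e ∉ M) then (-1:ℤ) else 0) := by
    intro e; unfold chg; split_ifs <;> tauto
  rw [Finset.sum_congr rfl (fun e _ => h e), Finset.sum_add_distrib]
  rw [Finset.sum_ite, Finset.sum_ite]
  simp [mul_comm]
  ring

lemma per_trail [DecidableEq V] (M : Finset (Sym2 V)) (w : V) (vs : List V)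
    (ht : IsAlternating M vs)
    (hf : ∀ e, (trailEdges vs).head? = some e → e ∉ M)
    (hl : ∀ e, (trailEdges vs).getLast? = some e → e ∉ M) :
    ∑ e ∈ edgesOf vs, chg M w e ≤ 0 := by
  obtain ⟨⟨hlen, hchain, hnd⟩, haltc⟩ := ht
  rcases vs with _ | ⟨v0, _ | ⟨v1, rest⟩⟩
  · simp at hlen
  · simp at hlen
  · have hsum : ∑ e ∈ edgesOf (v0 :: v1 :: rest), chg M w e
        = ((trailEdges (v0 :: v1 :: rest)).map (chg M w)).sum :=
      List.sum_toFinset _ hnd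
    rw [hsum]
    have hfe : s(v0, v1) ∉ M := hf _ rfl
    have hcore := trail_count_core M w rest v0 v1 hchain haltc hl
    rw [if_neg hfe] at hcore
    refine hcore.trans ?_
    split_ifs <;> norm_num

lemma card_nbrs_eq_filter [Fintype V] [DecidableEq V] (S : Finset (Sym2 V)) (w : V) :
    (nbrs S w).card = (S.filter (fun e => w ∈ e)).card := by
  apply Finset.card_nbij (fun v => s(w, v))
  · intro v hv
    simp only [nbrs, Finset.coe_filter, Set.mem_setOf_eq, Finset.mem_filter, Finset.mem_univ, true_and] at hv
    simp [Finset.mem_filter, hv]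
  · intro a _ b _ hab
    exact Sym2.congr_right.mp hab
  · intro e he
    simp only [Finset.coe_filter, Set.mem_setOf_eq] at he
    obtain ⟨b, rfl⟩ := Sym2.mem_iff_exists.mp he.2
    exact ⟨b, by simp [nbrs, he.1], rfl⟩

theorem stmt_5 [Fintype V] [DecidableEq V] (G : SimpleGraph V) [DecidableRel G.Adj]
    (APX OPT : Finset (Sym2 V))
    (hAPX : IsTF2M G APX) (hOPT : IsTF2M G OPT)
    (k : ℕ) (p : Fin k → List V)
    (halt : ∀ i, IsAlternating APX (p i))
    (hsub : ∀ i, edgesOf (p i) ⊆ APX ∆ OPT)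
    (hfirst : ∀ i, FirstEdgeIn (p i) (OPT \ APX))
    (hlast : ∀ i, LastEdgeIn (p i) (OPT \ APX))
    (hdisj : ∀ i j, i ≠ j → Disjoint (edgesOf (p i)) (edgesOf (p j))) :
    ∀ w : V,
      ((nbrs APX w).card : ℤ)
          - ((nbrs (APX \ Finset.univ.biUnion fun i => edgesOf (p i)) w).card : ℤ)
        ≤ ((nbrs OPT w).card : ℤ)
          - ((nbrs (OPT \ Finset.univ.biUnion fun i => edgesOf (p i)) w).card : ℤ) := by
  intro w
  set P : Finset (Sym2 V) := Finset.univ.biUnion (fun i => edgesOf (p i)) with hPdef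
  have hPsub : P ⊆ APX ∆ OPT := by
    intro e he
    rw [hPdef, Finset.mem_biUnion] at he
    obtain ⟨i, _, hei⟩ := he
    exact hsub i hei
  have hsumP : ∑ e ∈ P, chg APX w e ≤ 0 := by
    rw [hPdef, Finset.sum_biUnion (fun i _ j _ hij => hdisj i j hij)]
    apply Finset.sum_nonpos
    intro i _
    apply per_trail APX w (p i) (halt i)
    · intro e he
      obtain ⟨e', he', heq⟩ := hfirst i
      rw [heq, Option.some.injEq] at he
      subst he
      exact (Finset.mem_sdiff.mp he').2
    · intro e he
      obtain ⟨e', he', heq⟩ := hlast i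
      rw [heq, Option.some.injEq] at he
      subst he
      exact (Finset.mem_sdiff.mp he').2
  rw [sum_chg_finset] at hsumP
  have key : ((P.filter (fun e => w ∈ e ∧ e ∈ APX)).card : ℤ)
      ≤ ((P.filter (fun e => w ∈ e ∧ e ∉ APX)).card : ℤ) := by linarith
  have hA : (nbrs (APX ∩ P) w).card = (P.filter (fun e => w ∈ e ∧ e ∈ APX)).card := by
    rw [card_nbrs_eq_filter]
    congr 1
    ext e
    simp only [Finset.mem_filter, Finset.mem_inter]
    tauto
  have hO : (P.filter (fun e => w ∈ e ∧ e ∉ APX)).card ≤ (nbrs (OPT ∩ P) w).card := by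
    rw [card_nbrs_eq_filter]
    apply Finset.card_le_card
    intro e he
    simp only [Finset.mem_filter, Finset.mem_inter] at he ⊢
    obtain ⟨heP, hwe, hnA⟩ := he
    have heS := hPsub heP
    rw [Finset.mem_symmDiff] at heS
    refine ⟨⟨?_, heP⟩, hwe⟩
    tauto
  have hAeq : nbrs (APX \ P) w = nbrs APX w \ nbrs P w := by
    ext v; simp [nbrs, Finset.mem_sdiff]
  have hOeq : nbrs (OPT \ P) w = nbrs OPT w \ nbrs P w := by
    ext v; simp [nbrs, Finset.mem_sdiff]
  have hAint : nbrs APX w ∩ nbrs P w = nbrs (APX ∩ P) w := by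
    ext v; simp [nbrs]
  have hOint : nbrs OPT w ∩ nbrs P w = nbrs (OPT ∩ P) w := by
    ext v; simp [nbrs]
  have e1 := Finset.card_inter_add_card_sdiff (nbrs APX w) (nbrs P w)
  have e2 := Finset.card_inter_add_card_sdiff (nbrs OPT w) (nbrs P w)
  rw [hAint] at e1
  rw [hOint] at e2
  rw [hAeq, hOeq]
  have hfin : ((nbrs (APX ∩ P) w).card : ℤ) ≤ ((nbrs (OPT ∩ P) w).card : ℤ) := by
    rw [hA]
    refine key.trans ?_
    exact_mod_cast hO
  omega
end

section
/- Let APX, OPT be triangle-free 2-matchings with |N_APX(u)| ≤ |N_OPT(u)| for all u. Let P_1,...,P_{k-1} be edge-disjoint augmenting trails in APX △ OPT, and let P_k be an alternating trail contained in (APX △ OPT) \ (P_1 ∪ ... ∪ P_{k-1}) starting with an edge of OPT \ APX and whose first node is deficient w.r.t. P_1 ∪ ... ∪ P_{k-1}. Then for every vertex u other than possibly the last node of P_k: |N_{OPT △ (P_1 ∪ ... ∪ P_k)}(u)| ≤ 2. -/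
open Finset symmDiff

variable {V : Type*}

section ParityAux
variable [DecidableEq V]

private def esign (APX : Finset (Sym2 V)) (e : Sym2 V) : ℤ := if e ∈ APX then -1 else 1

private def wgt (APX : Finset (Sym2 V)) (u : V) (e : Sym2 V) : ℤ :=
  if u ∈ e then esign APX e else 0

private lemma sum_wgt (APX : Finset (Sym2 V)) (u : V) (L : List (Sym2 V)) :
    (L.map (wgt APX u)).sum =
      (L.countP (fun e => decide (u ∈ e ∧ e ∉ APX)) : ℤ) -
      (L.countP (fun e => decide (u ∈ e ∧ e ∈ APX)) : ℤ) := by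
  induction L with
  | nil => simp
  | cons e L ih =>
    simp only [List.map_cons, List.sum_cons, List.countP_cons, ih, wgt, esign]
    by_cases h1 : u ∈ e <;> by_cases h2 : e ∈ APX <;> simp [h1, h2] <;> push_cast <;> ring

private lemma core_identity (APX : Finset (Sym2 V)) (u : V) (rest : List V) :
    ∀ (v0 v1 : V),
      (v0 :: v1 :: rest).Chain' (· ≠ ·) →
      (trailEdges (v0 :: v1 :: rest)).Chain' (fun e f => e ∈ APX ↔ f ∉ APX) →
      ∃ (vl : V) (el : Sym2 V),
        (v0 :: v1 :: rest).getLast? = some vl ∧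
        (trailEdges (v0 :: v1 :: rest)).getLast? = some el ∧
        ((trailEdges (v0 :: v1 :: rest)).map (wgt APX u)).sum =
          esign APX s(v0, v1) * (if u = v0 then 1 else 0) +
          esign APX el * (if u = vl then 1 else 0) := by
  induction rest with
  | nil =>
    intro v0 v1 hch _
    refine ⟨v1, s(v0, v1), rfl, rfl, ?_⟩
    have hne : v0 ≠ v1 := (List.isChain_cons_cons.mp hch).1
    show wgt APX u s(v0, v1) + 0 = _
    unfold wgt
    by_cases h0 : u = v0
    · have h1 : u ≠ v1 := h0 ▸ hne
      simp [Sym2.mem_iff, h0, h1, hne, Ne.symm hne]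
    · by_cases h1 : u = v1 <;> simp [Sym2.mem_iff, h0, h1, hne, Ne.symm hne]
  | cons v2 rest' ih =>
    intro v0 v1 hch halt
    have hne : v0 ≠ v1 := (List.isChain_cons_cons.mp hch).1
    obtain ⟨vl, el, hvl, hel, hsum⟩ :=
      ih v1 v2 (List.isChain_cons_cons.mp hch).2 (List.isChain_cons_cons.mp halt).2
    have hrel : s(v0, v1) ∈ APX ↔ s(v1, v2) ∉ APX := (List.isChain_cons_cons.mp halt).1
    refine ⟨vl, el, by rw [List.getLast?_cons_cons]; exact hvl, ?_, ?_⟩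
    · show (s(v0,v1) :: s(v1,v2) :: trailEdges (v2 :: rest')).getLast? = some el
      rw [List.getLast?_cons_cons]; exact hel
    · have hsign : esign APX s(v1, v2) = - esign APX s(v0, v1) := by
        unfold esign
        by_cases h : s(v0, v1) ∈ APX
        · simp [h, hrel.mp h]
        · have : s(v1, v2) ∈ APX := by
            by_contra hc; exact h (hrel.mpr hc)
          simp [h, this]
      have hmap : (trailEdges (v0 :: v1 :: v2 :: rest')).map (wgt APX u) =
          wgt APX u s(v0, v1) :: (trailEdges (v1 :: v2 :: rest')).map (wgt APX u) := rfl
      rw [hmap, List.sum_cons, hsum, hsign]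
      have hw : wgt APX u s(v0, v1) =
          esign APX s(v0, v1) * ((if u = v0 then (1:ℤ) else 0) + (if u = v1 then 1 else 0)) := by
        unfold wgt
        by_cases h0 : u = v0
        · have h1 : u ≠ v1 := h0 ▸ hne
          simp [Sym2.mem_iff, h0, h1, hne, Ne.symm hne]
        · by_cases h1 : u = v1 <;> simp [Sym2.mem_iff, h0, h1, hne, Ne.symm hne]
      rw [hw]; ring

private lemma alt_ends (APX : Finset (Sym2 V)) :
    ∀ (L : List (Sym2 V)), L.Chain' (fun e f => e ∈ APX ↔ f ∉ APX) →
      L.countP (fun e => decide (e ∉ APX)) = L.countP (fun e => decide (e ∈ APX)) + 1 →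
      ∃ e1 el, L.head? = some e1 ∧ L.getLast? = some el ∧ e1 ∉ APX ∧ el ∉ APX
  | [], _, hc => by simp at hc
  | [e], _, hc => by
      by_cases h : e ∈ APX
      · simp [List.countP_cons, h] at hc
      · exact ⟨e, e, rfl, rfl, h, h⟩
  | e :: f :: L', hch, hc => by
      have r1 : e ∈ APX ↔ f ∉ APX := (List.isChain_cons_cons.mp hch).1
      have hch2 := (List.isChain_cons_cons.mp hch).2
      have hch3 : L'.Chain' (fun e f => e ∈ APX ↔ f ∉ APX) := hch2.tail
      have hc' : L'.countP (fun e => decide (e ∉ APX)) =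
          L'.countP (fun e => decide (e ∈ APX)) + 1 := by
        simp only [List.countP_cons] at hc
        by_cases h : e ∈ APX
        · have hf : f ∉ APX := r1.mp h
          simp [h, hf] at hc ⊢; omega
        · have hf : f ∈ APX := by by_contra hf; exact h (r1.mpr hf)
          simp [h, hf] at hc ⊢; omega
      obtain ⟨e1, el, h1, h2, he1, hel⟩ := alt_ends APX L' hch3 hc'
      cases L' with
      | nil => simp at h1
      | cons a Ltl =>
        have ha : a = e1 := by simpa using h1
        subst ha
        have rf : f ∈ APX ↔ a ∉ APX := (List.isChain_cons_cons.mp hch2).1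
        have hf : f ∈ APX := rf.mpr he1
        have he : e ∉ APX := fun h => (r1.mp h) hf
        refine ⟨e, el, rfl, ?_, he, hel⟩
        rw [List.getLast?_cons_cons]
        cases Ltl with
        | nil => simpa using h2
        | cons b Ltl2 => rw [List.getLast?_cons_cons]; exact h2

private lemma card_filter_toFinset (L : List (Sym2 V)) (hnd : L.Nodup) (q : Sym2 V → Prop)
    [DecidablePred q] :
    (L.toFinset.filter q).card = L.countP (fun e => decide (q e)) := by
  rw [List.countP_eq_length_filter,
    ← List.toFinset_card_of_nodup (hnd.filter (fun e => decide (q e))),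
    List.toFinset_filter]
  congr 1
  ext e
  simp

private lemma nbrs_card_eq [Fintype V] (S : Finset (Sym2 V)) (u : V) :
    (nbrs S u).card = (S.filter (fun e => u ∈ e)).card := by
  apply Finset.card_nbij (fun v => s(u, v))
  · intro v hv
    simp only [nbrs, Finset.mem_coe, Finset.mem_filter, Finset.mem_univ, true_and] at hv ⊢
    exact ⟨hv, Sym2.mem_mk_left u v⟩
  · intro v _ w _ hvw
    exact (Sym2.congr_right).mp hvw
  · intro e he
    simp only [Finset.coe_filter, Set.mem_setOf_eq] at he
    obtain ⟨heS, hue⟩ := he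
    obtain ⟨w, rfl⟩ := Sym2.mem_iff_exists.mp hue
    refine ⟨w, ?_, rfl⟩
    simp [nbrs, heS]

private lemma trail_ineq (APX OPT : Finset (Sym2 V)) (u : V) (vs : List V)
    (halt : IsAlternating APX vs)
    (hsub : edgesOf vs ⊆ APX ∆ OPT)
    (hfirst : ∀ e, (trailEdges vs).head? = some e → e ∉ APX)
    (hlast : ∀ e, (trailEdges vs).getLast? = some e → e ∈ APX → vs.getLast? ≠ some u) :
    ((edgesOf vs \ OPT).filter (fun e => u ∈ e)).card ≤
      ((edgesOf vs ∩ OPT).filter (fun e => u ∈ e)).card := by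
  obtain ⟨⟨hlen, hch, hnd⟩, haltc⟩ := halt
  obtain ⟨v0, rest0, rfl⟩ : ∃ a l, vs = a :: l := by
    cases vs with
    | nil => simp at hlen
    | cons a l => exact ⟨a, l, rfl⟩
  obtain ⟨v1, rest, rfl⟩ : ∃ b l, rest0 = b :: l := by
    cases rest0 with
    | nil => simp at hlen
    | cons b l => exact ⟨b, l, rfl⟩
  set vs := v0 :: v1 :: rest with hvs
  set L := trailEdges vs with hLdef
  have hdich : ∀ e ∈ L, (e ∈ APX ∧ e ∉ OPT) ∨ (e ∈ OPT ∧ e ∉ APX) := by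
    intro e heL
    have : e ∈ APX ∆ OPT := hsub (List.mem_toFinset.mpr heL)
    rcases Finset.mem_symmDiff.mp this with h | h
    · exact Or.inl h
    · exact Or.inr h
  have hA : ((edgesOf vs \ OPT).filter (fun e => u ∈ e)).card
      = L.countP (fun e => decide (u ∈ e ∧ e ∈ APX)) := by
    rw [Finset.sdiff_eq_filter, Finset.filter_filter]
    rw [show edgesOf vs = L.toFinset from rfl]
    rw [card_filter_toFinset L hnd (fun e => e ∉ OPT ∧ u ∈ e)]
    apply List.countP_congr
    intro e heL
    simp only [decide_eq_true_eq]
    rcases hdich e heL with ⟨h1, h2⟩ | ⟨h1, h2⟩ <;> constructor <;> intro h <;> tauto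
  have hO : ((edgesOf vs ∩ OPT).filter (fun e => u ∈ e)).card
      = L.countP (fun e => decide (u ∈ e ∧ e ∉ APX)) := by
    rw [← Finset.filter_mem_eq_inter, Finset.filter_filter]
    rw [show edgesOf vs = L.toFinset from rfl]
    rw [card_filter_toFinset L hnd (fun e => e ∈ OPT ∧ u ∈ e)]
    apply List.countP_congr
    intro e heL
    simp only [decide_eq_true_eq]
    rcases hdich e heL with ⟨h1, h2⟩ | ⟨h1, h2⟩ <;> constructor <;> intro h <;> tauto
  rw [hA, hO]
  obtain ⟨vl, el, hvl, hel, hsum⟩ := core_identity APX u rest v0 v1 hch haltc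
  have hsw := sum_wgt APX u L
  rw [hsum] at hsw
  have h1 : esign APX s(v0, v1) = 1 := by
    unfold esign
    rw [if_neg (hfirst s(v0, v1) rfl)]
  have h2 : (0:ℤ) ≤ esign APX el * (if u = vl then 1 else 0) := by
    by_cases hAel : el ∈ APX
    · have : u ≠ vl := by
        intro h
        exact hlast el hel hAel (h ▸ hvl)
      simp [this]
    · unfold esign
      rw [if_neg hAel]
      split <;> norm_num
  rw [h1] at hsw
  have hfin : (0:ℤ) ≤ (L.countP (fun e => decide (u ∈ e ∧ e ∉ APX)) : ℤ) -
      (L.countP (fun e => decide (u ∈ e ∧ e ∈ APX)) : ℤ) := by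
    rw [← hsw]
    have : (0:ℤ) ≤ (if u = v0 then (1:ℤ) else 0) := by split <;> norm_num
    linarith
  omega

private lemma decomp_counts (APX : Finset (Sym2 V)) (vs : List V)
    (hnd : (trailEdges vs).Nodup) :
    (APX ∩ edgesOf vs).card = (trailEdges vs).countP (fun e => decide (e ∈ APX)) ∧
    (edgesOf vs \ APX).card = (trailEdges vs).countP (fun e => decide (e ∉ APX)) := by
  constructor
  · rw [Finset.inter_comm, ← Finset.filter_mem_eq_inter]
    exact card_filter_toFinset _ hnd _
  · rw [Finset.sdiff_eq_filter]
    exact card_filter_toFinset _ hnd _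

end ParityAux

private lemma aug_ends [Fintype V] [DecidableEq V] (G : SimpleGraph V) [DecidableRel G.Adj]
    (APX : Finset (Sym2 V)) (vs : List V) (haug : IsAugmenting G APX vs) :
    (∀ e, (trailEdges vs).head? = some e → e ∉ APX) ∧
    (∀ e, (trailEdges vs).getLast? = some e → e ∉ APX) := by
  obtain ⟨⟨⟨hlen, hch, hnd⟩, haltc⟩, _, hcard⟩ := haug
  obtain ⟨hCA, hCO⟩ := decomp_counts APX vs hnd
  have h1 : (APX \ edgesOf vs).card + (APX ∩ edgesOf vs).card = APX.card :=
    Finset.card_sdiff_add_card_inter _ _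
  have h2 : (APX ∆ edgesOf vs).card = (APX \ edgesOf vs).card + (edgesOf vs \ APX).card := by
    rw [symmDiff_def]
    exact Finset.card_union_of_disjoint disjoint_sdiff_sdiff
  have hcnt : (trailEdges vs).countP (fun e => decide (e ∉ APX)) =
      (trailEdges vs).countP (fun e => decide (e ∈ APX)) + 1 := by omega
  obtain ⟨e1, el, hh, hl, he1, hel⟩ := alt_ends APX (trailEdges vs) haltc hcnt
  constructor
  · intro e he
    rw [hh] at he
    injection he with h'
    exact h' ▸ he1
  · intro e he
    rw [hl] at he
    injection he with h'
    exact h' ▸ hel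

theorem stmt_8 [Fintype V] [DecidableEq V] (G : SimpleGraph V) [DecidableRel G.Adj]
    (APX OPT : Finset (Sym2 V))
    (hAPX : IsTF2M G APX) (hOPT : IsTF2M G OPT)
    (hdom : ∀ u : V, (nbrs APX u).card ≤ (nbrs OPT u).card)
    (k : ℕ) (p : Fin k → List V)
    (haug : ∀ i, IsAugmenting G APX (p i))
    (hsub : ∀ i, edgesOf (p i) ⊆ APX ∆ OPT)
    (hdisj : ∀ i j, i ≠ j → Disjoint (edgesOf (p i)) (edgesOf (p j)))
    (pk : List V)
    (halt : IsAlternating APX pk)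
    (hpksub : edgesOf pk ⊆ (APX ∆ OPT) \ (Finset.univ.biUnion fun i => edgesOf (p i)))
    (hfirstedge : FirstEdgeIn pk (OPT \ APX))
    (hfirstnode : ∀ u : V, pk.head? = some u →
      Deficient APX OPT (Finset.univ.biUnion fun i => edgesOf (p i)) u) :
    ∀ u : V, pk.getLast? ≠ some u →
      (nbrs (OPT ∆ ((Finset.univ.biUnion fun i => edgesOf (p i)) ∪ edgesOf pk)) u).card ≤ 2 := by
  classical
  intro u hu
  set E' := Finset.univ.biUnion (fun i => edgesOf (p i)) with hE'def
  set P := edgesOf pk with hPdef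
  set T := E' ∪ P with hTdef
  set q : Sym2 V → Prop := fun e => u ∈ e with hqdef
  have cardsplit : ∀ (A B : Finset (Sym2 V)), Disjoint A B →
      ((A ∪ B).filter q).card = (A.filter q).card + (B.filter q).card := by
    intro A B hAB
    rw [Finset.filter_union]
    exact Finset.card_union_of_disjoint (Finset.disjoint_filter_filter hAB)
  have hdisjEP : Disjoint E' P := by
    rw [Finset.disjoint_right]
    intro e he
    exact (Finset.mem_sdiff.mp (hpksub he)).2
  have hstep : ∀ i : Fin k,
      ((edgesOf (p i) \ OPT).filter q).card ≤ ((edgesOf (p i) ∩ OPT).filter q).card := by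
    intro i
    obtain ⟨hfir, hlas⟩ := aug_ends G APX (p i) (haug i)
    exact trail_ineq APX OPT u (p i) (haug i).1 (hsub i) hfir
      (fun e hle hA => absurd hA (hlas e hle))
  have hstepP : ((P \ OPT).filter q).card ≤ ((P ∩ OPT).filter q).card := by
    apply trail_ineq APX OPT u pk halt
    · intro e he
      exact (Finset.mem_sdiff.mp (hpksub he)).1
    · intro e he
      obtain ⟨e', he', hh⟩ := hfirstedge
      rw [hh] at he
      rw [← Option.some_inj.mp he]
      exact (Finset.mem_sdiff.mp he').2
    · intro e _ _
      exact hu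
  have hTineq : ((T \ OPT).filter q).card ≤ ((T ∩ OPT).filter q).card := by
    have hd1 : T \ OPT = (E' \ OPT) ∪ (P \ OPT) := Finset.union_sdiff_distrib E' P OPT
    have hd2 : T ∩ OPT = (E' ∩ OPT) ∪ (P ∩ OPT) := Finset.union_inter_distrib_right E' P OPT
    have hE'sd : E' \ OPT = Finset.univ.biUnion (fun i => edgesOf (p i) \ OPT) := by
      ext e
      simp only [hE'def, Finset.mem_biUnion, Finset.mem_sdiff, Finset.mem_univ, true_and]
      tauto
    have hE'in : E' ∩ OPT = Finset.univ.biUnion (fun i => edgesOf (p i) ∩ OPT) := by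
      ext e
      simp only [hE'def, Finset.mem_biUnion, Finset.mem_inter, Finset.mem_univ, true_and]
      tauto
    have hbi1 : ((E' \ OPT).filter q).card = ∑ i, ((edgesOf (p i) \ OPT).filter q).card := by
      rw [hE'sd, Finset.filter_biUnion]
      exact Finset.card_biUnion (fun i _ j _ hij =>
        Finset.disjoint_filter_filter (Disjoint.mono sdiff_le sdiff_le (hdisj i j hij)))
    have hbi2 : ((E' ∩ OPT).filter q).card = ∑ i, ((edgesOf (p i) ∩ OPT).filter q).card := by
      rw [hE'in, Finset.filter_biUnion]
      exact Finset.card_biUnion (fun i _ j _ hij =>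
        Finset.disjoint_filter_filter (Disjoint.mono inter_subset_left inter_subset_left
          (hdisj i j hij)))
    rw [hd1, hd2,
      cardsplit _ _ (Disjoint.mono sdiff_le sdiff_le hdisjEP),
      cardsplit _ _ (Disjoint.mono inter_subset_left inter_subset_left hdisjEP),
      hbi1, hbi2]
    exact Nat.add_le_add (Finset.sum_le_sum fun i _ => hstep i) hstepP
  have hOPTsplit : (OPT \ T) ∪ (T ∩ OPT) = OPT := by
    rw [Finset.inter_comm]
    exact Finset.sdiff_union_inter OPT T
  have hdisj1 : Disjoint (OPT \ T) (T ∩ OPT) := by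
    rw [Finset.disjoint_left]
    intro e he1 he2
    exact (Finset.mem_sdiff.mp he1).2 (Finset.mem_inter.mp he2).1
  calc (nbrs (OPT ∆ T) u).card = ((OPT ∆ T).filter q).card := nbrs_card_eq _ u
    _ = (((OPT \ T) ∪ (T \ OPT)).filter q).card := by rw [symmDiff_def]; rfl
    _ = ((OPT \ T).filter q).card + ((T \ OPT).filter q).card :=
        cardsplit _ _ disjoint_sdiff_sdiff
    _ ≤ ((OPT \ T).filter q).card + ((T ∩ OPT).filter q).card := Nat.add_le_add_left hTineq _
    _ = (((OPT \ T) ∪ (T ∩ OPT)).filter q).card := (cardsplit _ _ hdisj1).symm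
    _ = (OPT.filter q).card := by rw [hOPTsplit]
    _ = (nbrs OPT u).card := (nbrs_card_eq _ u).symm
    _ ≤ 2 := hOPT.1.2 u
end
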